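/- Let q = 2^k for a positive integer k. A function f : F_q → F_q is a sign preserver on M_2(F_q) if and only if f is a bijective monomial, i.e., there exist c ∈ F_q with c ≠ 0 and an integer n with 1 ≤ n ≤ q−1 and gcd(n, q−1) = 1 such that f(x) = c·x^n for all x ∈ F_q. -/

import Mathlib

/-- An element of a field is *positive* if it is a nonzero square. -/
def IsPos {F : Type*} [Field F] (x : F) : Prop := ∃ y : F, y ≠ 0 ∧ y ^ 2 = x

/-- The `r`-th leading principal minor of a square matrix (the determinant of the
top-left `(r+1) × (r+1)` submatrix). -/
def leadingMinor {F : Type*} [CommRing F] {n : ℕ} (A : Matrix (Fin n) (Fin n) F)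
    (r : Fin n) : F :=
  (A.submatrix (Fin.castLE r.isLt) (Fin.castLE r.isLt)).det

/-- A matrix over a finite field is positive definite if it is symmetric and all its
leading principal minors are positive (nonzero squares). -/
def IsPosDef {F : Type*} [Field F] {n : ℕ} (A : Matrix (Fin n) (Fin n) F) : Prop :=
  A.IsSymm ∧ ∀ r : Fin n, IsPos (leadingMinor A r)

/-- The entrywise application `f[A]` of `f` to the matrix `A`. -/
def entrywiseMap {F : Type*} {n : ℕ} (f : F → F) (A : Matrix (Fin n) (Fin n) F) :
    Matrix (Fin n) (Fin n) F := Matrix.of fun i j => f (A i j)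

/-- `f` preserves positivity on `n × n` matrices. -/
def PreservesPos {F : Type*} [Field F] (n : ℕ) (f : F → F) : Prop :=
  ∀ A : Matrix (Fin n) (Fin n) F, IsPosDef A → IsPosDef (entrywiseMap f A)

/-- `f` is a sign preserver on `M_n(F)`: for every symmetric `A`, `A` is positive
definite iff `f[A]` is positive definite. -/
def SignPreserver {F : Type*} [Field F] (n : ℕ) (f : F → F) : Prop :=
  ∀ A : Matrix (Fin n) (Fin n) F, A.IsSymm → (IsPosDef A ↔ IsPosDef (entrywiseMap f A))

/-!
Every element of a finite field of characteristic `2` is a square, so "positive" just means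
"nonzero", and a symmetric matrix `!![a, b; b, d]` is positive definite iff `a ≠ 0` and
`a * d - b * b ≠ 0`. A sign preserver `f` therefore maps nonzero elements to nonzero ones, fixes
`0`, and satisfies `a * d = b * b ↔ f a * f d = f b * f b` whenever `a ≠ 0`. Choosing `b` with
`b * b = a * d` gives `f 1 * f (a * d) = f a * f d`, and choosing `b = a` gives injectivity. Hence
`x ↦ f x / f 1` is an injective endomorphism of the cyclic group `Fˣ`, i.e. a power map
`x ↦ x ^ n` with `n` coprime to `q - 1`. Conversely, for such a monomial
`f a * f d - f b * f b = c ^ 2 * ((a * d) ^ n - (b * b) ^ n)`, which vanishes iff `a * d = b * b`.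
-/

section CyclicGroup

variable {G : Type*} [Group G] [Finite G]

lemma coprime_card_of_injective_pow {n : ℕ} (h : Function.Injective fun g : G => g ^ n) :
    (Nat.card G).Coprime n := by
  refine Nat.coprime_of_dvd fun p hp hpG hpn => ?_
  have : Fact p.Prime := ⟨hp⟩
  obtain ⟨g, hg⟩ := exists_prime_orderOf_dvd_card' p hpG
  have hg1 : g ^ n = 1 ^ n := by rw [one_pow, ← orderOf_dvd_iff_pow_eq_one, hg]; exact hpn
  exact hp.ne_one (by rw [← hg, h hg1, orderOf_one])

lemma MonoidHom.exists_eq_pow_of_isCyclic [IsCyclic G] (σ : G →* G) :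
    ∃ n : ℕ, 1 ≤ n ∧ n ≤ Nat.card G ∧ ∀ g, σ g = g ^ n := by
  obtain ⟨m, hm⟩ := σ.map_cyclic
  have hN : (0 : ℤ) < Nat.card G := by exact_mod_cast Nat.card_pos
  have hr0 := Int.emod_nonneg (m - 1) hN.ne'
  have hrN := Int.emod_lt_of_pos (m - 1) hN
  -- shifting the exponent by one lands it in `[1, |G|]` rather than `[0, |G|)`
  refine ⟨((m - 1) % Nat.card G).toNat + 1, by omega, by omega, fun g => ?_⟩
  rw [hm, ← zpow_natCast]
  push_cast
  rw [Int.toNat_of_nonneg hr0, zpow_add_one, zpow_mod_natCard, zpow_sub_one, inv_mul_cancel_right]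

end CyclicGroup

section Positivity

variable {F : Type*} [Field F]

lemma isPos_iff_ne_zero (hsq : ∀ x : F, IsSquare x) (x : F) : IsPos x ↔ x ≠ 0 := by
  refine ⟨fun ⟨y, hy, hyx⟩ => hyx ▸ pow_ne_zero 2 hy, fun hx => ?_⟩
  obtain ⟨y, rfl⟩ := hsq x
  exact ⟨y, left_ne_zero_of_mul hx, sq y⟩

lemma leadingMinor_last {n : ℕ} (A : Matrix (Fin (n + 1)) (Fin (n + 1)) F) :
    leadingMinor A (Fin.last n) = A.det := by
  simp [leadingMinor]

lemma isPosDef_fin_two_iff (hsq : ∀ x : F, IsSquare x) {A : Matrix (Fin 2) (Fin 2) F}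
    (hA : A.IsSymm) : IsPosDef A ↔ A 0 0 ≠ 0 ∧ A 0 0 * A 1 1 - A 0 1 * A 0 1 ≠ 0 := by
  have h10 : A 1 0 = A 0 1 := hA.apply 0 1
  have h0 : leadingMinor A 0 = A 0 0 := by simp [leadingMinor]
  have h1 : leadingMinor A 1 = A.det := leadingMinor_last A
  rw [IsPosDef, Fin.forall_fin_two, isPos_iff_ne_zero hsq, isPos_iff_ne_zero hsq, h0, h1,
    Matrix.det_fin_two, h10, and_iff_right hA]

end Positivity

lemma entrywiseMap_eq_map {F : Type*} {n : ℕ} (f : F → F) (A : Matrix (Fin n) (Fin n) F) :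
    entrywiseMap f A = A.map f :=
  rfl

section MinorPreservers

variable {F : Type*} [Field F]

/-- `f` preserves the nonvanishing of both leading minors of every symmetric `2 × 2` matrix
`!![a, b; b, d]`. -/
def PreservesNonzeroMinors (f : F → F) : Prop :=
  ∀ a b d : F, (a ≠ 0 ∧ a * d - b * b ≠ 0 ↔ f a ≠ 0 ∧ f a * f d - f b * f b ≠ 0)

lemma signPreserver_two_iff (hsq : ∀ x : F, IsSquare x) (f : F → F) :
    SignPreserver 2 f ↔ PreservesNonzeroMinors f := by
  constructor
  · intro hf a b d
    have hA : (!![a, b; b, d] : Matrix (Fin 2) (Fin 2) F).IsSymm := by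
      ext i j
      fin_cases i <;> fin_cases j <;> rfl
    have := hf _ hA
    rw [entrywiseMap_eq_map, isPosDef_fin_two_iff hsq hA, isPosDef_fin_two_iff hsq (hA.map f)]
      at this
    simpa using this
  · intro hf A hA
    rw [entrywiseMap_eq_map, isPosDef_fin_two_iff hsq hA, isPosDef_fin_two_iff hsq (hA.map f)]
    exact hf _ _ _

namespace PreservesNonzeroMinors

variable {f : F → F}

lemma map_ne_zero (hf : PreservesNonzeroMinors f) {a : F} (ha : a ≠ 0) : f a ≠ 0 :=
  ((hf a 1 0).mp ⟨ha, by simp⟩).1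

lemma map_zero (hf : PreservesNonzeroMinors f) : f 0 = 0 := by
  by_contra h0
  have hminor : ∀ b d, f 0 * f d = f b * f b := fun b d => by
    by_contra h
    exact ((hf 0 b d).mpr ⟨h0, sub_ne_zero.mpr h⟩).1 rfl
  have hconst : ∀ d, f d = f 0 := fun d => mul_left_cancel₀ h0 (hminor 0 d)
  have := ((hf 1 0 1).mp ⟨one_ne_zero, by simp⟩).2
  rw [hconst 1, hconst 0, sub_self] at this
  exact this rfl

lemma mul_eq_mul_self_iff (hf : PreservesNonzeroMinors f) {a : F} (ha : a ≠ 0) (b d : F) :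
    a * d = b * b ↔ f a * f d = f b * f b := by
  have h := hf a b d
  rw [and_iff_right ha, and_iff_right (hf.map_ne_zero ha), ← not_iff_not] at h
  simpa [sub_eq_zero] using h

lemma injective (hf : PreservesNonzeroMinors f) : Function.Injective f := by
  intro x y hxy
  by_cases hx : x = 0
  · subst hx
    by_contra hy
    exact hf.map_ne_zero (Ne.symm hy) (hxy ▸ hf.map_zero)
  · have := (hf.mul_eq_mul_self_iff hx x y).mpr (by rw [hxy])
    exact (mul_left_cancel₀ hx this).symm

lemma map_one_mul_map_mul (hf : PreservesNonzeroMinors f) (hsq : ∀ x : F, IsSquare x)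
    (a d : F) : f 1 * f (a * d) = f a * f d := by
  by_cases ha : a = 0
  · simp [ha, hf.map_zero]
  obtain ⟨b, hb⟩ := hsq (a * d)
  rw [(hf.mul_eq_mul_self_iff one_ne_zero b (a * d)).mp (by rw [one_mul, hb]),
    (hf.mul_eq_mul_self_iff ha b d).mp hb]

lemma exists_eq_mul_pow [Finite F] (hf : PreservesNonzeroMinors f)
    (hsq : ∀ x : F, IsSquare x) :
    ∃ n : ℕ, 1 ≤ n ∧ n ≤ Nat.card Fˣ ∧ (Nat.card Fˣ).Coprime n ∧ ∀ x, f x = f 1 * x ^ n := by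
  have hf1 : f 1 ≠ 0 := hf.map_ne_zero one_ne_zero
  let σ : Fˣ →* Fˣ := MonoidHom.mk' (fun u => Units.mk0 ((f 1)⁻¹ * f u) <|
      mul_ne_zero (inv_ne_zero hf1) (hf.map_ne_zero u.ne_zero)) fun u v => by
    ext
    simp only [Units.val_mul, Units.val_mk0]
    rw [mul_mul_mul_comm, ← hf.map_one_mul_map_mul hsq, ← mul_assoc,
      inv_mul_cancel_right₀ hf1]
  have hσ : ∀ u : Fˣ, f u = f 1 * (σ u : F) := fun u => by simp [σ, hf1]
  obtain ⟨n, hn1, hnN, hσn⟩ := σ.exists_eq_pow_of_isCyclic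
  have hinj : Function.Injective fun u : Fˣ => u ^ n := fun u v huv => by
    simp only [← hσn] at huv
    exact Units.ext <| hf.injective <| by rw [hσ, hσ, huv]
  refine ⟨n, hn1, hnN, coprime_card_of_injective_pow hinj, fun x => ?_⟩
  obtain rfl | hx := eq_or_ne x 0
  · rw [hf.map_zero, zero_pow (by omega), mul_zero]
  · simpa [hσn] using hσ (Units.mk0 x hx)

end PreservesNonzeroMinors

end MinorPreservers

lemma pow_injective_of_coprime {F : Type*} [Field F] {n : ℕ} (hn : n ≠ 0)
    (hcop : (Nat.card Fˣ).Coprime n) :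
    Function.Injective fun x : F => x ^ n := by
  intro x y hxy
  simp only at hxy
  obtain rfl | hx := eq_or_ne x 0
  · rw [zero_pow hn, eq_comm, pow_eq_zero_iff hn] at hxy
    exact hxy.symm
  obtain rfl | hy := eq_or_ne y 0
  · rwa [zero_pow hn, pow_eq_zero_iff hn] at hxy
  have := hcop.pow_left_bijective.injective (a₁ := Units.mk0 x hx) (a₂ := Units.mk0 y hy)
    (Units.ext <| by simpa using hxy)
  simpa using congrArg Units.val this

lemma preservesNonzeroMinors_const_mul_pow {F : Type*} [Field F] {c : F} {n : ℕ} (hc : c ≠ 0)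
    (hn : n ≠ 0) (hinj : Function.Injective fun x : F => x ^ n) :
    PreservesNonzeroMinors fun x => c * x ^ n := by
  intro a b d
  have hminor : c * a ^ n * (c * d ^ n) - c * b ^ n * (c * b ^ n)
      = c ^ 2 * ((a * d) ^ n - (b * b) ^ n) := by ring
  rw [hminor, mul_ne_zero_iff, mul_ne_zero_iff, sub_ne_zero, sub_ne_zero, hinj.ne_iff]
  simp [hc, hn]

lemma charP_two_of_card_eq_two_pow {F : Type*} [Field F] [Fintype F] {k : ℕ}
    (hcard : Fintype.card F = 2 ^ k) : CharP F 2 := by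
  have h : (2 : F) ^ k = 0 := by exact_mod_cast hcard ▸ FiniteField.cast_card_eq_zero F
  exact CharTwo.of_one_ne_zero_of_two_eq_zero one_ne_zero (pow_eq_zero_iff'.mp h).1

theorem stmt8_general {F : Type*} [Field F] [Fintype F] (k : ℕ)
    (hcard : Fintype.card F = 2 ^ k) (f : F → F) :
    SignPreserver 2 f ↔
      ∃ (c : F) (n : ℕ), c ≠ 0 ∧ 1 ≤ n ∧ n ≤ 2 ^ k - 1 ∧ Nat.gcd n (2 ^ k - 1) = 1 ∧
        ∀ x : F, f x = c * x ^ n := by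
  have := charP_two_of_card_eq_two_pow hcard
  have hsq : ∀ x : F, IsSquare x := isSquare_of_charTwo'
  have hunits : Nat.card Fˣ = 2 ^ k - 1 := by
    rw [Nat.card_units, Nat.card_eq_fintype_card, hcard]
  rw [signPreserver_two_iff hsq, ← hunits]
  constructor
  · intro hf
    obtain ⟨n, hn1, hnN, hcop, hfx⟩ := hf.exists_eq_mul_pow hsq
    exact ⟨f 1, n, hf.map_ne_zero one_ne_zero, hn1, hnN, hcop.symm, hfx⟩
  · rintro ⟨c, n, hc, hn1, -, hcop, hfx⟩
    rw [show f = fun x => c * x ^ n from funext hfx]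
    exact preservesNonzeroMinors_const_mul_pow hc (by omega)
      (pow_injective_of_coprime (by omega) (Nat.Coprime.symm hcop))

/-- over `F = 𝔽_{2^k}`, `f` is a sign preserver on `M_2(F)` iff `f` is a
bijective monomial, i.e. `f x = c x^n` with `c ≠ 0`, `1 ≤ n ≤ q − 1`, `gcd(n, q−1) = 1`. -/
theorem stmt8 {F : Type*} [Field F] [Fintype F] (k : ℕ) (hk : 1 ≤ k)
    (hcard : Fintype.card F = 2 ^ k) (f : F → F) :
    SignPreserver 2 f ↔
      ∃ (c : F) (n : ℕ), c ≠ 0 ∧ 1 ≤ n ∧ n ≤ 2 ^ k - 1 ∧ Nat.gcd n (2 ^ k - 1) = 1 ∧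
        ∀ x : F, f x = c * x ^ n :=
  stmt8_general k hcard f
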